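/- arXiv:0811.3125 — 3 statements merged into one kernel-verified Lean document; each statement's English description precedes it below -/
import Mathlib

section
/- The supremum over k ≥ 1 of (C⁽²⁾_k)^{1/(2k)} equals its limit as k → ∞, and both equal (3/2)√3, where C⁽²⁾_k = (1/(2k+1))·binom(3k,k). -/
/-!
The ratio `binom(3k+3, k+1) / binom(3k, k) = (3k+1)(3k+2)(3k+3) / ((k+1)(2k+1)(2k+2))` lies
between `27/4 · (3k+1)/(3k+4)` and `27/4`, so by induction
`(27/4)^k / (3k+1) ≤ binom(3k, k) ≤ (27/4)^k`. Thus `C⁽²⁾_k` is `(27/4)^k` up to a factor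
between `1/((3k+1)(2k+1))` and `1`, whose `k`-th root tends to `1`; hence `(C⁽²⁾_k)^{1/k}` tends
to `27/4` from below, and `√(27/4) = (3/2)√3` is both the limit and an upper bound of
`(C⁽²⁾_k)^{1/(2k)}`, hence also its supremum.
-/

open Filter

/-- The type-2 Fuss-Catalan number `C⁽²⁾_k = (1/(2k+1))·binom(3k,k)`, as a real number. -/
noncomputable def fussCatalan2 (k : ℕ) : ℝ := (1 / (2 * (k : ℝ) + 1)) * ((3 * k).choose k : ℝ)

open Topology Real

namespace Nat

theorem choose_three_mul_add_three_mul (k : ℕ) :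
    (3 * k + 3).choose (k + 1) * ((k + 1) * (2 * k + 1) * (2 * k + 2)) =
      (3 * k).choose k * ((3 * k + 1) * (3 * k + 2) * (3 * k + 3)) := by
  have h₃ := (add_one_mul_choose_eq (3 * k + 2) k).symm
  have h₂ := choose_mul_succ_eq (3 * k + 1) k
  have h₁ := choose_mul_succ_eq (3 * k) k
  rw [show 3 * k + 1 + 1 - k = 2 * k + 2 by omega] at h₂
  rw [show 3 * k + 1 - k = 2 * k + 1 by omega] at h₁
  rw [show 3 * k + 2 + 1 = 3 * k + 3 by ring] at h₃
  linear_combination (2 * k + 1) * (2 * k + 2) * h₃ - (3 * k + 3) * (2 * k + 1) * h₂ -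
    (3 * k + 3) * (3 * k + 2) * h₁

end Nat

theorem choose_three_mul_le (k : ℕ) : ((3 * k).choose k : ℝ) ≤ (27 / 4) ^ k := by
  induction k with
  | zero => simp
  | succ k ih =>
    have hrec := congrArg (Nat.cast : ℕ → ℝ) (Nat.choose_three_mul_add_three_mul k)
    push_cast at hrec
    have hD : (0 : ℝ) < (k + 1) * (2 * k + 1) * (2 * k + 2) := by positivity
    rw [show 3 * (k + 1) = 3 * k + 3 by ring, ← mul_le_mul_iff_left₀ hD, hrec, pow_succ]
    have hN : (0 : ℝ) ≤ (3 * k + 1) * (3 * k + 2) * (3 * k + 3) := by positivity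
    nlinarith [mul_le_mul_of_nonneg_right ih hN]

theorem pow_le_mul_choose_three_mul (k : ℕ) :
    (27 / 4 : ℝ) ^ k ≤ (3 * k + 1) * (3 * k).choose k := by
  induction k with
  | zero => simp
  | succ k ih =>
    have hrec := congrArg (Nat.cast : ℕ → ℝ) (Nat.choose_three_mul_add_three_mul k)
    push_cast at hrec
    have hD : (0 : ℝ) < (k + 1) * (2 * k + 1) * (2 * k + 2) := by positivity
    have hpoly : 27 * (3 * (k : ℝ) + 1) * ((k + 1) * (2 * k + 1) * (2 * k + 2)) ≤
        4 * (3 * k + 4) * ((3 * k + 1) * (3 * k + 2) * (3 * k + 3)) := by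
      nlinarith [sq_nonneg (k : ℝ), (Nat.cast_nonneg k : (0 : ℝ) ≤ k)]
    have hrhs : (3 * ((k + 1 : ℕ) : ℝ) + 1) * (3 * (k + 1)).choose (k + 1) *
        ((k + 1) * (2 * k + 1) * (2 * k + 2)) =
        (3 * k + 4) * ((3 * k).choose k * ((3 * k + 1) * (3 * k + 2) * (3 * k + 3))) := by
      rw [← hrec, show 3 * (k + 1) = 3 * k + 3 by ring]; push_cast; ring
    rw [← mul_le_mul_iff_left₀ hD, hrhs, pow_succ]
    nlinarith [mul_le_mul_of_nonneg_right ih hD.le,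
      mul_le_mul_of_nonneg_left hpoly (by positivity : (0 : ℝ) ≤ (3 * k).choose k)]

theorem fussCatalan2_nonneg (k : ℕ) : 0 ≤ fussCatalan2 k := by
  unfold fussCatalan2; positivity

theorem fussCatalan2_le_pow (k : ℕ) : fussCatalan2 k ≤ (27 / 4) ^ k := by
  have hk : (1 : ℝ) ≤ 2 * k + 1 := by linarith [(Nat.cast_nonneg k : (0 : ℝ) ≤ k)]
  calc fussCatalan2 k ≤ (3 * k).choose k := by
        unfold fussCatalan2
        exact mul_le_of_le_one_left (by positivity) (div_le_one_of_le₀ hk (by positivity))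
    _ ≤ (27 / 4) ^ k := choose_three_mul_le k

theorem pow_le_mul_fussCatalan2 (k : ℕ) :
    (27 / 4 : ℝ) ^ k ≤ ((3 * k + 1) * (2 * k + 1)) * fussCatalan2 k := by
  have hk : (2 * k + 1 : ℝ) ≠ 0 := by positivity
  calc (27 / 4 : ℝ) ^ k ≤ (3 * k + 1) * (3 * k).choose k := pow_le_mul_choose_three_mul k
    _ = ((3 * k + 1) * (2 * k + 1)) * fussCatalan2 k := by
        unfold fussCatalan2; field_simp

theorem Real.rpow_one_div_le_of_le_pow {a r : ℝ} {k : ℕ} (ha : 0 ≤ a) (hr : 0 ≤ r) (hk : k ≠ 0)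
    (h : a ≤ r ^ k) : a ^ (1 / (k : ℝ)) ≤ r := by
  rwa [one_div, rpow_inv_le_iff_of_pos ha hr (by positivity), rpow_natCast]

theorem tendsto_rpow_one_div_of_le_pow {a q : ℕ → ℝ} {r : ℝ} (hr : 0 < r) (ha : ∀ k, 0 ≤ a k)
    (hup : ∀ k, a k ≤ r ^ k) (hlow : ∀ k, r ^ k ≤ q k * a k)
    (hq : Tendsto (fun k => q k ^ (1 / (k : ℝ))) atTop (𝓝 1)) :
    Tendsto (fun k => a k ^ (1 / (k : ℝ))) atTop (𝓝 r) := by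
  have hlim : Tendsto (fun k => r / q k ^ (1 / (k : ℝ))) atTop (𝓝 r) := by
    have h := (tendsto_const_nhds (x := r)).div hq one_ne_zero
    rwa [div_one] at h
  refine tendsto_of_tendsto_of_tendsto_of_le_of_le' hlim tendsto_const_nhds ?_ ?_
  · filter_upwards [eventually_ne_atTop 0] with k hk
    have hq : 0 < q k := pos_of_mul_pos_left ((pow_pos hr k).trans_le (hlow k)) (ha k)
    rw [div_le_iff₀ (rpow_pos_of_pos hq _), mul_comm, ← mul_rpow hq.le (ha k)]
    calc r = (r ^ k) ^ (1 / (k : ℝ)) := by rw [one_div, pow_rpow_inv_natCast hr.le hk]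
      _ ≤ (q k * a k) ^ (1 / (k : ℝ)) := by gcongr; exact hlow k
  · filter_upwards [eventually_ne_atTop 0] with k hk
    exact rpow_one_div_le_of_le_pow (ha k) hr.le hk (hup k)

theorem tendsto_mul_add_rpow_one_div {b : ℝ} (hb : 0 < b) (c : ℝ) :
    Tendsto (fun k : ℕ => (b * k + c) ^ (1 / (k : ℝ))) atTop (𝓝 1) := by
  have hlin : Tendsto (fun k : ℕ => b * k + c) atTop atTop :=
    tendsto_atTop_add_const_right _ c (tendsto_natCast_atTop_atTop.const_mul_atTop hb)
  refine ((tendsto_rpow_div_mul_add b 1 (-c) one_ne_zero.symm).comp hlin).congr fun k => ?_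
  simp only [Function.comp, one_mul, add_neg_cancel_right, div_mul_cancel_left₀ hb.ne', one_div]

theorem tendsto_fussCatalan2_rpow :
    Tendsto (fun k => fussCatalan2 k ^ (1 / (k : ℝ))) atTop (𝓝 (27 / 4)) := by
  refine tendsto_rpow_one_div_of_le_pow (by norm_num) fussCatalan2_nonneg fussCatalan2_le_pow
    pow_le_mul_fussCatalan2 ?_
  simpa using ((tendsto_mul_add_rpow_one_div three_pos 1).mul
    (tendsto_mul_add_rpow_one_div two_pos 1)).congr fun k =>
      (mul_rpow (by positivity) (by positivity)).symm

theorem fussCatalan2_rpow_eq_sqrt (k : ℕ) :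
    fussCatalan2 k ^ (1 / (2 * (k : ℝ))) = √(fussCatalan2 k ^ (1 / (k : ℝ))) := by
  rw [sqrt_eq_rpow, ← rpow_mul (fussCatalan2_nonneg k)]
  ring_nf

theorem sqrt_twentySeven_div_four : √(27 / 4 : ℝ) = 3 / 2 * √3 := by
  rw [show (27 / 4 : ℝ) = (3 / 2) ^ 2 * 3 by norm_num, sqrt_mul (by positivity),
    sqrt_sq (by norm_num)]

/-- `sup_{k ≥ 1} (C⁽²⁾_k)^{1/2k} = lim_{k→∞} (C⁽²⁾_k)^{1/2k} = (3/2)√3`. -/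
theorem stmt4 :
    Tendsto (fun k : ℕ => (fussCatalan2 k) ^ (1 / (2 * (k : ℝ)))) atTop
      (nhds ((3 / 2) * Real.sqrt 3)) ∧
    (∀ k : ℕ, 1 ≤ k → (fussCatalan2 k) ^ (1 / (2 * (k : ℝ))) ≤ (3 / 2) * Real.sqrt 3) ∧
    (⨆ k : {k : ℕ // 1 ≤ k}, (fussCatalan2 k) ^ (1 / (2 * ((k : ℕ) : ℝ)))) =
      (3 / 2) * Real.sqrt 3 := by
  have hlim : Tendsto (fun k : ℕ => (fussCatalan2 k) ^ (1 / (2 * (k : ℝ)))) atTop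
      (𝓝 (3 / 2 * √3)) := by
    simp_rw [fussCatalan2_rpow_eq_sqrt, ← sqrt_twentySeven_div_four]
    exact tendsto_fussCatalan2_rpow.sqrt
  have hle (k : ℕ) (hk : 1 ≤ k) : (fussCatalan2 k) ^ (1 / (2 * (k : ℝ))) ≤ 3 / 2 * √3 := by
    rw [fussCatalan2_rpow_eq_sqrt, ← sqrt_twentySeven_div_four]
    exact sqrt_le_sqrt (rpow_one_div_le_of_le_pow (fussCatalan2_nonneg k) (by norm_num)
      (by omega) (fussCatalan2_le_pow k))
  refine ⟨hlim, hle, ?_⟩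
  have : Nonempty {k : ℕ // 1 ≤ k} := ⟨⟨1, le_rfl⟩⟩
  refine le_antisymm (ciSup_le fun k => hle k k.2) (le_of_tendsto hlim ?_)
  filter_upwards [eventually_ge_atTop 1] with k hk
  exact le_ciSup (f := fun k : {k : ℕ // 1 ≤ k} => (fussCatalan2 k) ^ (1 / (2 * ((k : ℕ) : ℝ))))
    ⟨_, Set.forall_mem_range.2 fun k => hle k k.2⟩ ⟨k, hk⟩
end

section
/- For every n ≥ 1, the pairing ϖ_n = {{1, 2n}, {2,3}, {4,5}, …, {2n−2, 2n−1}} is the unique non-crossing pair partition π of {1, …, 2n} such that π ∨ Î = 1_{2n} in the lattice of non-crossing partitions, where Î = {{1,2}, {3,4}, …, {2n−1, 2n}} is the interval pair partition. -/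
/-- `f` is a (fixed-point-free) pairing of `{0, …, 2n−1}`, i.e. an involution
pairing the points; each block of the pair partition is `{i, f i}`. -/
def IsPairing (n : ℕ) (f : ℕ → ℕ) : Prop :=
  ∀ i < 2 * n, f i < 2 * n ∧ f (f i) = i ∧ f i ≠ i

/-- The pairing `f` is non-crossing: there are no `a < b < f a < f b`. -/
def IsNonCrossing (n : ℕ) (f : ℕ → ℕ) : Prop :=
  ¬ ∃ a b, a < 2 * n ∧ b < 2 * n ∧ a < b ∧ b < f a ∧ f a < f b

/-- The interval pairing `Î = {{0,1}, {2,3}, …, {2n−2, 2n−1}}`, as a relation. -/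
def intervalRel (n : ℕ) (i j : ℕ) : Prop :=
  i < 2 * n ∧ j < 2 * n ∧ ((j = i + 1 ∧ i % 2 = 0) ∨ (i = j + 1 ∧ j % 2 = 0))

/-- `π ∨ Î = 1_{2n}`: the equivalence relation generated by the blocks of the pairing `f`
together with the blocks of the interval pairing relates all points of `{0, …, 2n−1}`. -/
def JoinIsFull (n : ℕ) (f : ℕ → ℕ) : Prop :=
  ∀ i < 2 * n, ∀ j < 2 * n,
    Relation.EqvGen (fun a b => (a < 2 * n ∧ b = f a) ∨ intervalRel n a b) i j

/-- The pairing `ϖ_n = {{0, 2n−1}, {1,2}, {3,4}, …, {2n−3, 2n−2}}` (0-indexed version of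
`{{1, 2n}, {2,3}, …, {2n−2, 2n−1}}`). -/
def varpi (n : ℕ) : ℕ → ℕ := fun i =>
  if i = 0 then 2 * n - 1 else if i = 2 * n - 1 then 0
  else if i % 2 = 1 then i + 1 else i - 1

/-!
In a non-crossing pairing `f`, the points strictly inside a pair `{p, f p}` are matched among
themselves, so `f p - p` is odd. If moreover `p < f p` with `p` even, then `[p, f p]` is a union of
blocks of both `f` and `Î`, hence of classes of `π ∨ Î`; fullness of the join forces
`{p, f p} = {0, 2n−1}`. If `p` is odd and `f p > p + 1`, then `p + 1` is even and matched inside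
`(p, f p)` to a larger point, contradicting the even case; so `f p = p + 1`. These are exactly the
pairs of `ϖ_n`.
-/

theorem Finset.even_card_of_involution {α : Type*} {s : Finset α} (g : α → α)
    (hmaps : ∀ a ∈ s, g a ∈ s) (hinv : ∀ a ∈ s, g (g a) = a) (hne : ∀ a ∈ s, g a ≠ a) :
    Even s.card := by
  rw [← ZMod.natCast_eq_zero_iff_even, Finset.card_eq_sum_ones, Nat.cast_sum, Nat.cast_one]
  exact Finset.sum_involution (fun a _ => g a) (fun _ _ => by decide)
    (fun a ha _ => hne a ha) hmaps hinv

theorem Relation.EqvGen.iff_of_forall_rel {α : Type*} {r : α → α → Prop} {P : α → Prop}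
    (h : ∀ a b, r a b → (P a ↔ P b)) {x y : α} (hxy : Relation.EqvGen r x y) : P x ↔ P y := by
  induction hxy with
  | rel a b hab => exact h a b hab
  | refl => rfl
  | symm _ _ _ ih => exact ih.symm
  | trans _ _ _ _ _ ih₁ ih₂ => exact ih₁.trans ih₂

section Pairing

variable {n : ℕ} {f : ℕ → ℕ}

theorem IsPairing.eq_of_forall_lt_apply {g : ℕ → ℕ} (hf : IsPairing n f) (hg : IsPairing n g)
    (h : ∀ i < 2 * n, i < f i → f i = g i) : ∀ i < 2 * n, f i = g i := by
  intro i hi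
  obtain ⟨hfi, hffi, hfi_ne⟩ := hf i hi
  rcases lt_or_gt_of_ne hfi_ne with hgt | hlt
  · have hgfi : g (f i) = i := by rw [← h (f i) hfi (by rwa [hffi]), hffi]
    rw [← (hg (f i) hfi).2.1, hgfi]
  · exact h i hi hlt

theorem IsNonCrossing.mapsTo_Ioo (hnc : IsNonCrossing n f) (hp : IsPairing n f) {i : ℕ}
    (hi : i < 2 * n) : Set.MapsTo f (Set.Ioo i (f i)) (Set.Ioo i (f i)) := by
  rintro x ⟨hix, hxfi⟩
  obtain ⟨hfi, hffi, -⟩ := hp i hi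
  obtain ⟨hfx, hffx, -⟩ := hp x (hxfi.trans hfi)
  have hfx_ne_i : f x ≠ i := by rintro rfl; rw [hffx] at hxfi; exact hxfi.false
  have hfx_ne_fi : f x ≠ f i := fun h => by
    have := congrArg f h; rw [hffx, hffi] at this; omega
  constructor <;> by_contra! h
  · exact hnc ⟨f x, i, hfx, hi, by omega, by rwa [hffx], by rwa [hffx]⟩
  · exact hnc ⟨i, x, hi, hxfi.trans hfi, hix, hxfi, by omega⟩

theorem IsNonCrossing.mapsTo_Icc (hnc : IsNonCrossing n f) (hp : IsPairing n f) {i : ℕ}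
    (hi : i < 2 * n) : Set.MapsTo f (Set.Icc i (f i)) (Set.Icc i (f i)) := by
  rintro x ⟨hix, hxfi⟩
  obtain ⟨-, hffi, -⟩ := hp i hi
  obtain rfl | hix := hix.eq_or_lt
  · exact ⟨hxfi, le_rfl⟩
  obtain rfl | hxfi := hxfi.eq_or_lt
  · rw [hffi]; exact ⟨le_rfl, hix.le⟩
  exact Set.Ioo_subset_Icc_self (hnc.mapsTo_Ioo hp hi ⟨hix, hxfi⟩)

theorem IsNonCrossing.apply_mod_two_ne (hnc : IsNonCrossing n f) (hp : IsPairing n f) {i : ℕ}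
    (hi : i < 2 * n) (hlt : i < f i) : f i % 2 ≠ i % 2 := by
  have hfi := (hp i hi).1
  have hcard : Even (Finset.Ioo i (f i)).card :=
    Finset.even_card_of_involution f
      (fun x hx => Finset.mem_Ioo.2 (hnc.mapsTo_Ioo hp hi (Finset.mem_Ioo.1 hx)))
      (fun x hx => (hp x ((Finset.mem_Ioo.1 hx).2.trans hfi)).2.1)
      (fun x hx => (hp x ((Finset.mem_Ioo.1 hx).2.trans hfi)).2.2)
  rw [Nat.card_Ioo] at hcard
  obtain ⟨k, hk⟩ := hcard
  omega

theorem JoinIsFull.mem_of_saturated (hj : JoinIsFull n f) {S : Set ℕ}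
    (hfS : ∀ a < 2 * n, (a ∈ S ↔ f a ∈ S)) (hIS : ∀ a b, intervalRel n a b → (a ∈ S ↔ b ∈ S))
    {a b : ℕ} (ha : a < 2 * n) (hb : b < 2 * n) (haS : a ∈ S) : b ∈ S := by
  refine (Relation.EqvGen.iff_of_forall_rel ?_ (hj a ha b hb)).1 haS
  rintro x y (⟨hx, rfl⟩ | hxy)
  exacts [hfS x hx, hIS x y hxy]

theorem JoinIsFull.eq_zero_of_lt_apply_of_even (hj : JoinIsFull n f) (hnc : IsNonCrossing n f)
    (hp : IsPairing n f) {p : ℕ} (hp2n : p < 2 * n) (hlt : p < f p) (heven : p % 2 = 0) :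
    p = 0 ∧ f p = 2 * n - 1 := by
  have hfp := (hp p hp2n).1
  have hodd := hnc.apply_mod_two_ne hp hp2n hlt
  have hfS : ∀ a < 2 * n, (a ∈ Set.Icc p (f p) ↔ f a ∈ Set.Icc p (f p)) := fun a ha =>
    ⟨fun h => hnc.mapsTo_Icc hp hp2n h, fun h => by
      simpa only [(hp a ha).2.1] using hnc.mapsTo_Icc hp hp2n h⟩
  have hIS : ∀ a b, intervalRel n a b → (a ∈ Set.Icc p (f p) ↔ b ∈ Set.Icc p (f p)) := by
    rintro a b ⟨-, -, h⟩
    simp only [Set.mem_Icc]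
    omega
  have h0 := hj.mem_of_saturated hfS hIS hp2n (b := 0) (by omega) ⟨le_rfl, hlt.le⟩
  have hlast := hj.mem_of_saturated hfS hIS hp2n (b := 2 * n - 1) (by omega) ⟨le_rfl, hlt.le⟩
  exact ⟨Nat.le_zero.1 h0.1, by have := hlast.2; omega⟩

theorem JoinIsFull.apply_eq_succ_of_odd (hj : JoinIsFull n f) (hnc : IsNonCrossing n f)
    (hp : IsPairing n f) {p : ℕ} (hp2n : p < 2 * n) (hlt : p < f p) (hodd : p % 2 = 1) :
    f p = p + 1 := by
  by_contra hne
  have hpar := hnc.apply_mod_two_ne hp hp2n hlt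
  have hfp := (hp p hp2n).1
  have hmem : p + 1 ∈ Set.Ioo p (f p) := ⟨p.lt_succ_self, by omega⟩
  obtain ⟨hlo, -⟩ := hnc.mapsTo_Ioo hp hp2n hmem
  obtain ⟨-, -, hfixed⟩ := hp (p + 1) (by omega)
  have := hj.eq_zero_of_lt_apply_of_even hnc hp (p := p + 1) (by omega) (by omega) (by omega)
  omega

end Pairing

theorem varpi_zero (n : ℕ) : varpi n 0 = 2 * n - 1 := by simp [varpi]

theorem varpi_of_odd {n i : ℕ} (hodd : i % 2 = 1) (hi : i < 2 * n - 1) : varpi n i = i + 1 := by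
  unfold varpi; rw [if_neg (by omega), if_neg (by omega), if_pos hodd]

theorem varpi_isPairing (n : ℕ) : IsPairing n (varpi n) := by
  intro i hi
  unfold varpi
  grind

theorem varpi_isNonCrossing (n : ℕ) : IsNonCrossing n (varpi n) := by
  rintro ⟨a, b, ha, hb, hab, h₁, h₂⟩
  simp only [varpi] at h₁ h₂
  split_ifs at h₁ h₂ <;> omega

theorem varpi_joinIsFull (n : ℕ) : JoinIsFull n (varpi n) := by
  set r := fun a b => (a < 2 * n ∧ b = varpi n a) ∨ intervalRel n a b
  have hstep : ∀ k, k + 1 < 2 * n → r k (k + 1) := fun k hk => by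
    rcases Nat.mod_two_eq_zero_or_one k with he | ho
    · exact Or.inr ⟨by omega, hk, Or.inl ⟨rfl, he⟩⟩
    · exact Or.inl ⟨by omega, (varpi_of_odd ho (by omega)).symm⟩
  have hzero : ∀ m < 2 * n, Relation.EqvGen r 0 m := by
    intro m
    induction m with
    | zero => exact fun _ => .refl 0
    | succ k ih => exact fun hk => .trans _ _ _ (ih (by omega)) (.rel _ _ (hstep k hk))
  exact fun i hi j hj => .trans _ _ _ (.symm _ _ (hzero i hi)) (hzero j hj)

theorem apply_eq_varpi_of_lt_apply {n : ℕ} {f : ℕ → ℕ} (hp : IsPairing n f)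
    (hnc : IsNonCrossing n f) (hj : JoinIsFull n f) {i : ℕ} (hi : i < 2 * n) (hlt : i < f i) :
    f i = varpi n i := by
  rcases Nat.mod_two_eq_zero_or_one i with heven | hodd
  · obtain ⟨rfl, hfi⟩ := hj.eq_zero_of_lt_apply_of_even hnc hp hi hlt heven
    rw [hfi, varpi_zero]
  · have hfi := hj.apply_eq_succ_of_odd hnc hp hi hlt hodd
    have hi' : i < 2 * n - 1 := by have := (hp i hi).1; omega
    rw [hfi, varpi_of_odd hodd hi']

theorem stmt14_general (n : ℕ) :
    (IsPairing n (varpi n) ∧ IsNonCrossing n (varpi n) ∧ JoinIsFull n (varpi n)) ∧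
    (∀ f : ℕ → ℕ, IsPairing n f → IsNonCrossing n f → JoinIsFull n f →
      ∀ i < 2 * n, f i = varpi n i) :=
  ⟨⟨varpi_isPairing n, varpi_isNonCrossing n, varpi_joinIsFull n⟩,
    fun _ hp hnc hj => hp.eq_of_forall_lt_apply (varpi_isPairing n)
      fun _ hi hlt => apply_eq_varpi_of_lt_apply hp hnc hj hi hlt⟩

/-- `ϖ_n` is the unique non-crossing pairing `π` of `{0, …, 2n−1}` with `π ∨ Î = 1_{2n}`,
where `Î` is the interval pairing. -/
theorem stmt14 (n : ℕ) (hn : 1 ≤ n) :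
    (IsPairing n (varpi n) ∧ IsNonCrossing n (varpi n) ∧ JoinIsFull n (varpi n)) ∧
    (∀ f : ℕ → ℕ, IsPairing n f → IsNonCrossing n f → JoinIsFull n f →
      ∀ i < 2 * n, f i = varpi n i) :=
  stmt14_general n
end

section
/- Let μ_λ be a symmetric Borel probability measure on ℝ (depending on a parameter λ > 1) supported in ℝ \ (−δ, δ) for some δ > 0, whose negative second and fourth moments are m_{−2}(μ_λ) = ∫ x^{−2} dμ_λ and m_{−4}(μ_λ) = ∫ x^{−4} dμ_λ. Suppose R_μ(z) = z + (v−1)z³ + O(z⁵) and that the Cauchy transform G_{μ_λ} is the compositional inverse (near 0) of B_λ(z) = R_μ(z) + (1 − √(1+4λ²z²))/(2z). Then m_{−2}(μ_λ) = 1/(λ²−1) and m_{−4}(μ_λ) = (λ⁴ − 1 + v)/(λ²−1)⁴. -/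
/-!
Symmetry of `μ` kills the odd negative moments, so near `w = 0` the Cauchy transform is
`G(w) = -(m₋₂ w + m₋₄ w³) + O(w⁵)`; the error is controlled because `supp μ` stays at distance
`δ` from the origin. Expanding the square root gives `B(z) = (1 - λ²) z + (v - 1 + λ⁴) z³ + O(z⁵)`.
Substituting the second expansion into the first and using `G (B z) = z`, the coefficients of
`z` and `z³` must vanish: `1 + m₋₂ (1 - λ²) = 0` and `m₋₂ (v - 1 + λ⁴) + m₋₄ (1 - λ²)³ = 0`.
-/

open MeasureTheory Filter Topology Asymptotics

section PowerSeries

variable {𝕜 : Type*} [NontriviallyNormedField 𝕜]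

theorem eq_zero_of_isBigO_pow {c : 𝕜} {m n : ℕ} (hmn : m < n)
    (h : (fun z : 𝕜 => c * z ^ m) =O[𝓝[≠] 0] fun z => z ^ n) : c = 0 := by
  by_contra hc
  have hsmall : (fun z : 𝕜 => z ^ m) =o[𝓝[≠] 0] fun z => z ^ m :=
    (isLittleO_const_mul_left_iff hc).mp
      (h.trans_isLittleO ((isLittleO_pow_pow hmn).mono nhdsWithin_le_nhds))
  have hne : ∀ᶠ z in 𝓝[≠] (0 : 𝕜), z ≠ 0 := self_mem_nhdsWithin
  exact isLittleO_irrefl (hne.mono fun z hz => pow_ne_zero m hz).frequently hsmall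

theorem isBigO_pow_pow_nhdsNE {m n : ℕ} (hmn : m ≤ n) :
    (fun z : 𝕜 => z ^ n) =O[𝓝[≠] 0] fun z => z ^ m := by
  rcases hmn.lt_or_eq with h | rfl
  · exact (isLittleO_pow_pow h).isBigO.mono nhdsWithin_le_nhds
  · exact isBigO_refl _ _

theorem eq_zero_of_linear_add_cubic_isBigO {c₁ c₃ : 𝕜}
    (h : (fun z : 𝕜 => c₁ * z + c₃ * z ^ 3) =O[𝓝[≠] 0] fun z => z ^ 5) :
    c₁ = 0 ∧ c₃ = 0 := by
  have h₁ : c₁ = 0 := by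
    refine eq_zero_of_isBigO_pow (m := 1) (n := 3) (by norm_num) ?_
    have h₃ : (fun z : 𝕜 => c₁ * z + c₃ * z ^ 3) =O[𝓝[≠] 0] fun z => z ^ 3 :=
      h.trans (isBigO_pow_pow_nhdsNE (by norm_num))
    simpa using h₃.sub ((isBigO_refl (fun z : 𝕜 => z ^ 3) _).const_mul_left c₃)
  subst h₁
  exact ⟨rfl, eq_zero_of_isBigO_pow (m := 3) (n := 5) (by norm_num) (by simpa using h)⟩

theorem coeffs_of_comp_eventually_eq_id {G B : 𝕜 → 𝕜} {m₂ m₄ a b : 𝕜}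
    (hG : (fun w => G w + (m₂ * w + m₄ * w ^ 3)) =O[𝓝 0] fun w => w ^ 5)
    (hB : (fun z => B z - (a * z + b * z ^ 3)) =O[𝓝[≠] 0] fun z => z ^ 5)
    (hGB : ∀ᶠ z in 𝓝[≠] 0, G (B z) = z) :
    1 + m₂ * a = 0 ∧ m₂ * b + m₄ * a ^ 3 = 0 := by
  have hcube : (fun z : 𝕜 => z ^ 3) =O[𝓝[≠] 0] fun z => z := by
    simpa using isBigO_pow_pow_nhdsNE (𝕜 := 𝕜) (m := 1) (n := 3) (by norm_num)
  have hBa : (fun z => B z - a * z) =O[𝓝[≠] 0] fun z => z ^ 3 := by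
    refine ((hB.trans (isBigO_pow_pow_nhdsNE (by norm_num))).add
      ((isBigO_refl (fun z : 𝕜 => z ^ 3) _).const_mul_left b)).congr_left fun z => ?_
    ring
  have hBz : B =O[𝓝[≠] 0] fun z => z := by
    refine ((hBa.trans hcube).add ((isBigO_refl (fun z : 𝕜 => z) _).const_mul_left a)).congr_left
      fun z => ?_
    ring
  have hB0 : Tendsto B (𝓝[≠] 0) (𝓝 0) :=
    hBz.trans_tendsto (tendsto_id.mono_left nhdsWithin_le_nhds)
  have hGB5 : (fun z => G (B z) + (m₂ * B z + m₄ * B z ^ 3)) =O[𝓝[≠] 0] fun z => z ^ 5 :=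
    (hG.comp_tendsto hB0).trans (hBz.pow 5)
  have hsq : (fun z => B z ^ 2 + B z * (a * z) + (a * z) ^ 2) =O[𝓝[≠] 0] fun z => z ^ 2 := by
    have haz : (fun z => a * z) =O[𝓝[≠] 0] fun z => z := (isBigO_refl _ _).const_mul_left a
    simpa [sq] using ((hBz.mul hBz).add (hBz.mul haz)).add (haz.mul haz)
  have hcubes : (fun z => B z ^ 3 - (a * z) ^ 3) =O[𝓝[≠] 0] fun z => z ^ 5 :=
    ((hBa.mul hsq).congr_left fun z => by ring).congr_right fun z => by ring
  refine eq_zero_of_linear_add_cubic_isBigO ?_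
  refine ((hGB5.sub (hB.const_mul_left m₂)).sub (hcubes.const_mul_left m₄)).congr' ?_
    EventuallyEq.rfl
  filter_upwards [hGB] with z hz
  rw [hz]
  ring

end PowerSeries

theorem abs_sqrt_one_add_sub_le {u : ℝ} (h0 : 0 ≤ u) (h1 : u ≤ 1) :
    |√(1 + u) - (1 + u / 2 - u ^ 2 / 8)| ≤ u ^ 3 / 8 := by
  set s := √(1 + u)
  set p := 1 + u / 2 - u ^ 2 / 8
  have hs : s ^ 2 = 1 + u := Real.sq_sqrt (by linarith)
  have hs1 : 1 ≤ s := Real.one_le_sqrt.mpr (by linarith)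
  have hp1 : 1 ≤ p := by simp only [p]; nlinarith
  have hprod : (s - p) * (s + p) = u ^ 3 / 8 - u ^ 4 / 64 := by linear_combination hs
  rw [abs_le]
  constructor
  · nlinarith [pow_nonneg h0 3, pow_nonneg h0 4]
  · by_contra! h
    nlinarith [mul_nonneg (by linarith : 0 ≤ s - p - u ^ 3 / 8) (by linarith : 0 ≤ s + p - 2),
      pow_nonneg h0 3, pow_nonneg h0 4]

theorem isBigO_one_sub_sqrt_div (lam : ℝ) :
    (fun z : ℝ => (1 - √(1 + 4 * lam ^ 2 * z ^ 2)) / (2 * z) - (-lam ^ 2 * z + lam ^ 4 * z ^ 3))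
      =O[𝓝 0] fun z => z ^ 5 := by
  have hsmall : ∀ᶠ z : ℝ in 𝓝 0, 4 * lam ^ 2 * z ^ 2 ≤ 1 := by
    have h : Tendsto (fun z : ℝ => 4 * lam ^ 2 * z ^ 2) (𝓝 0) (𝓝 0) := by
      simpa using ((continuous_pow 2).const_mul (4 * lam ^ 2)).tendsto (0 : ℝ)
    exact h.eventually (ge_mem_nhds one_pos)
  refine IsBigO.of_bound (4 * lam ^ 6) (hsmall.mono fun z hz => ?_)
  rcases eq_or_ne z 0 with rfl | hz0
  · simp
  have hsqrt := abs_sqrt_one_add_sub_le (by positivity) hz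
  have hrepr : (1 - √(1 + 4 * lam ^ 2 * z ^ 2)) / (2 * z) - (-lam ^ 2 * z + lam ^ 4 * z ^ 3)
      = -(√(1 + 4 * lam ^ 2 * z ^ 2) - (1 + 4 * lam ^ 2 * z ^ 2 / 2 - (4 * lam ^ 2 * z ^ 2) ^ 2 / 8))
        / (2 * z) := by
    field_simp
    ring
  rw [hrepr, norm_div, norm_neg, Real.norm_eq_abs, Real.norm_eq_abs, norm_pow, Real.norm_eq_abs,
    abs_mul, abs_two, div_le_iff₀ (by positivity)]
  calc _ ≤ (4 * lam ^ 2 * z ^ 2) ^ 3 / 8 := hsqrt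
    _ = 4 * lam ^ 6 * |z| ^ 5 * (2 * |z|) := by
      rw [← sq_abs z]
      ring

section CauchyTransform

theorem abs_inv_pow_le_of_le_abs {δ x : ℝ} (hδ : 0 < δ) (hx : δ ≤ |x|) (k : ℕ) :
    |(x ^ k)⁻¹| ≤ (δ ^ k)⁻¹ := by
  rw [abs_inv, abs_pow]
  exact inv_anti₀ (pow_pos hδ k) (pow_le_pow_left₀ hδ.le hx k)

theorem half_le_abs_sub_of_le_abs {δ w x : ℝ} (hx : δ ≤ |x|) (hw : |w| ≤ δ / 2) :
    δ / 2 ≤ |w - x| := by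
  have := abs_sub_abs_le_abs_sub x w
  rw [abs_sub_comm] at this
  linarith

theorem abs_inv_sub_add_even_part_le {δ w x : ℝ} (hδ : 0 < δ) (hx : δ ≤ |x|)
    (hw : |w| ≤ δ / 2) :
    |((w - x)⁻¹ + (w - -x)⁻¹) / 2 + (w * (x ^ 2)⁻¹ + w ^ 3 * (x ^ 4)⁻¹)| ≤ 2 / δ ^ 6 * |w| ^ 5 := by
  have hx0 : x ≠ 0 := by rintro rfl; simp at hx; linarith
  have hw2 : w ^ 2 ≤ δ ^ 2 / 4 := by nlinarith [sq_abs w, abs_nonneg w]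
  have hx2 : δ ^ 2 ≤ x ^ 2 := by nlinarith [sq_abs x]
  have hgap : x ^ 2 / 2 ≤ x ^ 2 - w ^ 2 := by nlinarith
  have hwx : w ^ 2 - x ^ 2 ≠ 0 := by nlinarith
  have hrepr : ((w - x)⁻¹ + (w - -x)⁻¹) / 2 + (w * (x ^ 2)⁻¹ + w ^ 3 * (x ^ 4)⁻¹)
      = w ^ 5 / (x ^ 4 * (w ^ 2 - x ^ 2)) := by
    have h1 : w - x ≠ 0 := fun h => hwx (by linear_combination (w + x) * h)
    have h2 : w - -x ≠ 0 := fun h => hwx (by linear_combination (w - x) * h)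
    field_simp
    ring
  rw [hrepr, abs_div, abs_mul, abs_pow, abs_pow, div_le_iff₀ (by positivity),
    abs_of_neg (by nlinarith : w ^ 2 - x ^ 2 < 0)]
  have hx4 : δ ^ 4 ≤ |x| ^ 4 := pow_le_pow_left₀ hδ.le hx 4
  have hden : δ ^ 6 / 2 ≤ |x| ^ 4 * -(w ^ 2 - x ^ 2) := by
    calc δ ^ 6 / 2 = δ ^ 4 * (δ ^ 2 / 2) := by ring
      _ ≤ |x| ^ 4 * -(w ^ 2 - x ^ 2) := by gcongr; linarith
  calc |w| ^ 5 = 2 / δ ^ 6 * |w| ^ 5 * (δ ^ 6 / 2) := by field_simp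
    _ ≤ 2 / δ ^ 6 * |w| ^ 5 * (|x| ^ 4 * -(w ^ 2 - x ^ 2)) := by gcongr

variable {μ : Measure ℝ} [IsFiniteMeasure μ] {δ : ℝ}

theorem integrable_inv_pow_of_le_abs (hδ : 0 < δ) (hμ : ∀ᵐ x ∂μ, δ ≤ |x|) (k : ℕ) :
    Integrable (fun x : ℝ => (x ^ k)⁻¹) μ :=
  .of_bound (measurable_id.pow_const k).inv.aestronglyMeasurable (δ ^ k)⁻¹
    (hμ.mono fun _ hx => abs_inv_pow_le_of_le_abs hδ hx k)

theorem integrable_inv_sub_of_le_abs (hδ : 0 < δ) (hμ : ∀ᵐ x ∂μ, δ ≤ |x|) {w : ℝ}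
    (hw : |w| ≤ δ / 2) : Integrable (fun x : ℝ => (w - x)⁻¹) μ :=
  .of_bound (measurable_const.sub measurable_id).inv.aestronglyMeasurable (δ / 2)⁻¹
    (hμ.mono fun _ hx => by
      rw [Real.norm_eq_abs, abs_inv]
      exact inv_anti₀ (by positivity) (half_le_abs_sub_of_le_abs hx hw))

theorem isBigO_integral_inv_sub_add [μ.IsNegInvariant] (hδ : 0 < δ) (hμ : ∀ᵐ x ∂μ, δ ≤ |x|) :
    (fun w => ∫ x, (w - x)⁻¹ ∂μ + ((∫ x, (x ^ 2)⁻¹ ∂μ) * w + (∫ x, (x ^ 4)⁻¹ ∂μ) * w ^ 3))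
      =O[𝓝 0] fun w => w ^ 5 := by
  have hnear : ∀ᶠ w : ℝ in 𝓝 0, |w| ≤ δ / 2 := by
    filter_upwards [Metric.closedBall_mem_nhds (0 : ℝ) (half_pos hδ)] with w hw
    simpa [Real.dist_eq] using hw
  refine IsBigO.of_bound (2 / δ ^ 6 * μ.real Set.univ) (hnear.mono fun w hw => ?_)
  have hint₀ := integrable_inv_sub_of_le_abs hδ hμ hw
  have hint₂ := (integrable_inv_pow_of_le_abs hδ hμ 2).const_mul w
  have hint₄ := (integrable_inv_pow_of_le_abs hδ hμ 4).const_mul (w ^ 3)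
  have hint₂₄ : Integrable (fun x : ℝ => w * (x ^ 2)⁻¹ + w ^ 3 * (x ^ 4)⁻¹) μ := hint₂.add hint₄
  set f : ℝ → ℝ := fun x => (w - x)⁻¹ + (w * (x ^ 2)⁻¹ + w ^ 3 * (x ^ 4)⁻¹)
  have hint : Integrable f μ := hint₀.add hint₂₄
  have hsum : ∫ x, (w - x)⁻¹ ∂μ + ((∫ x, (x ^ 2)⁻¹ ∂μ) * w + (∫ x, (x ^ 4)⁻¹ ∂μ) * w ^ 3)
      = ∫ x, f x ∂μ := by
    rw [integral_add hint₀ hint₂₄, integral_add hint₂ hint₄, integral_const_mul,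
      integral_const_mul]
    ring
  -- the odd moments `m₋₁, m₋₃, m₋₅` drop out once `f` is replaced by its even part
  have heven : ∫ x, f x ∂μ = ∫ x, (f x + f (-x)) / 2 ∂μ := by
    rw [integral_div, integral_add hint hint.comp_neg, integral_neg_eq_self]
    ring
  rw [hsum, heven, norm_pow, mul_right_comm]
  refine norm_integral_le_of_norm_le_const (hμ.mono fun x hx => ?_)
  simp only [f, even_two.neg_pow, (by decide : Even 4).neg_pow, Real.norm_eq_abs]
  convert abs_inv_sub_add_even_part_le hδ hx hw using 2
  ring

end CauchyTransform

theorem stmt17_general (lam v δ M : ℝ) (hlam : 1 < lam) (hδ : 0 < δ)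
    (μ : Measure ℝ) [IsProbabilityMeasure μ]
    (hsym : μ.map (fun x => -x) = μ)
    (hsupp : ∀ᵐ x ∂μ, δ ≤ |x| ∧ |x| ≤ M)
    (R : ℝ → ℝ)
    (hR : ∃ C ε : ℝ, 0 < ε ∧ ∀ z : ℝ, |z| < ε →
      |R z - (z + (v - 1) * z ^ 3)| ≤ C * |z| ^ 5)
    (hG : ∃ ε : ℝ, 0 < ε ∧ ∀ z : ℝ, z ≠ 0 → |z| < ε →
      ∫ x, (R z + (1 - Real.sqrt (1 + 4 * lam ^ 2 * z ^ 2)) / (2 * z) - x)⁻¹ ∂μ = z) :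
    (∫ x, (x ^ 2)⁻¹ ∂μ) = 1 / (lam ^ 2 - 1) ∧
    (∫ x, (x ^ 4)⁻¹ ∂μ) = (lam ^ 4 - 1 + v) / (lam ^ 2 - 1) ^ 4 := by
  obtain ⟨C, εR, hεR, hRC⟩ := hR
  obtain ⟨εG, hεG, hGB⟩ := hG
  have : μ.IsNegInvariant := ⟨hsym⟩
  have hRO : (fun z => R z - (z + (v - 1) * z ^ 3)) =O[𝓝 0] fun z => z ^ 5 :=
    .of_bound C <| by
      filter_upwards [Metric.ball_mem_nhds 0 hεR] with z hz
      simpa using hRC z (by simpa using hz)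
  have hBO : (fun z => R z + (1 - √(1 + 4 * lam ^ 2 * z ^ 2)) / (2 * z)
      - ((1 - lam ^ 2) * z + (v - 1 + lam ^ 4) * z ^ 3)) =O[𝓝[≠] 0] fun z => z ^ 5 :=
    ((hRO.add (isBigO_one_sub_sqrt_div lam)).congr_left fun z => by ring).mono nhdsWithin_le_nhds
  have hGBz : ∀ᶠ z in 𝓝[≠] 0,
      ∫ x, (R z + (1 - √(1 + 4 * lam ^ 2 * z ^ 2)) / (2 * z) - x)⁻¹ ∂μ = z := by
    filter_upwards [self_mem_nhdsWithin, nhdsWithin_le_nhds (Metric.ball_mem_nhds 0 hεG)]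
      with z hz0 hzε
    exact hGB z hz0 (by simpa using hzε)
  obtain ⟨h₁, h₃⟩ := coeffs_of_comp_eventually_eq_id
    (isBigO_integral_inv_sub_add hδ (hsupp.mono fun _ hx => hx.1)) hBO hGBz
  have hne : lam ^ 2 - 1 ≠ 0 := by nlinarith
  constructor
  · rw [eq_div_iff hne]
    linear_combination -h₁
  · rw [eq_div_iff (pow_ne_zero 4 hne)]
    linear_combination -(lam ^ 2 - 1) * h₃ - (v - 1 + lam ^ 4) * h₁

/-- Let `μ_λ` be a symmetric compactly supported Borel probability measure on `ℝ` supported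
outside `(−δ, δ)`, and suppose its Cauchy transform is inverse (near 0) to
`B_λ(z) = R_μ(z) + (1 − √(1+4λ²z²))/(2z)` where `R_μ(z) = z + (v−1)z³ + O(z⁵)`.
Then `m_{−2}(μ_λ) = 1/(λ²−1)` and `m_{−4}(μ_λ) = (λ⁴ − 1 + v)/(λ²−1)⁴`. -/
theorem stmt17 (lam v δ M : ℝ) (hlam : 1 < lam) (hv : 0 < v) (hδ : 0 < δ)
    (μ : Measure ℝ) [IsProbabilityMeasure μ]
    (hsym : μ.map (fun x => -x) = μ)
    (hsupp : ∀ᵐ x ∂μ, δ ≤ |x| ∧ |x| ≤ M)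
    (R : ℝ → ℝ)
    (hR : ∃ C ε : ℝ, 0 < ε ∧ ∀ z : ℝ, |z| < ε →
      |R z - (z + (v - 1) * z ^ 3)| ≤ C * |z| ^ 5)
    (hG : ∃ ε : ℝ, 0 < ε ∧ ∀ z : ℝ, z ≠ 0 → |z| < ε →
      ∫ x, (R z + (1 - Real.sqrt (1 + 4 * lam ^ 2 * z ^ 2)) / (2 * z) - x)⁻¹ ∂μ = z) :
    (∫ x, (x ^ 2)⁻¹ ∂μ) = 1 / (lam ^ 2 - 1) ∧
    (∫ x, (x ^ 4)⁻¹ ∂μ) = (lam ^ 4 - 1 + v) / (lam ^ 2 - 1) ^ 4 :=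
  stmt17_general lam v δ M hlam hδ μ hsym hsupp R hR hG
end
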